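/- With Φ, Ψ and ext as defined: for assignments σ and σ' satisfying Φ, σ and σ' are connected in G(Φ) if and only if ext(σ) and ext(σ') are connected in G(Ψ). (Replacing a clause x ∨ y ∨ z by the auxiliary-variable gadget (a → x) ∧ (b → y) ∧ (c → z) ∧ (a ∨ b ∨ c) preserves connectivity of the solution space.) -/

import Mathlib

/-- Two satisfying assignments of `Φ` are connected in `G(Φ)`: there is a finite
sequence of assignments satisfying `Φ` from the first to the second in which
consecutive assignments differ in the value of exactly one variable. -/
def ConnectedIn {X : Type*} (Φ : (X → Bool) → Prop) (a b : X → Bool) : Prop :=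
  ∃ (n : ℕ) (f : ℕ → X → Bool), f 0 = a ∧ f n = b ∧ (∀ i ≤ n, Φ (f i)) ∧
    ∀ i < n, ∃! x : X, f i x ≠ f (i + 1) x

variable {V : Type*}

/-- The formula `Φ`: `Φ₀` together with the clause `x ∨ y ∨ z`. -/
def PhiCl (Φ₀ : (V → Bool) → Prop) (x y z : V) (σ : V → Bool) : Prop :=
  Φ₀ σ ∧ (σ x = true ∨ σ y = true ∨ σ z = true)

/-- The formula `Ψ` on the extended variable set `V ⊕ Fin 3` (the fresh variables
`a`, `b`, `c` are `Sum.inr 0`, `Sum.inr 1`, `Sum.inr 2`): `Φ₀` on the restriction,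
the implications `a → x`, `b → y`, `c → z`, and the clause `a ∨ b ∨ c`. -/
def PsiCl (Φ₀ : (V → Bool) → Prop) (x y z : V) (τ : V ⊕ Fin 3 → Bool) : Prop :=
  Φ₀ (τ ∘ Sum.inl) ∧
    (τ (Sum.inr 0) = true → τ (Sum.inl x) = true) ∧
    (τ (Sum.inr 1) = true → τ (Sum.inl y) = true) ∧
    (τ (Sum.inr 2) = true → τ (Sum.inl z) = true) ∧
    (τ (Sum.inr 0) = true ∨ τ (Sum.inr 1) = true ∨ τ (Sum.inr 2) = true)

/-- The canonical extension of `σ : V → Bool` to `V ⊕ Fin 3`, assigning to the fresh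
variables `a`, `b`, `c` the values `σ x`, `σ y`, `σ z` respectively. -/
def extAssign (x y z : V) (σ : V → Bool) : V ⊕ Fin 3 → Bool :=
  Sum.elim σ ![σ x, σ y, σ z]

open Relation

def StepRel {X : Type*} (Φ : (X → Bool) → Prop) (u v : X → Bool) : Prop :=
  Φ u ∧ Φ v ∧ ∃! x : X, u x ≠ v x

theorem stepRel_symm {X : Type*} (Φ : (X → Bool) → Prop) : Symmetric (StepRel Φ) := by
  rintro u v ⟨hu, hv, w, hw, huniq⟩
  exact ⟨hv, hu, w, fun h => hw h.symm, fun u' h => huniq u' fun h' => h h'.symm⟩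

theorem connectedIn_of_rtg {X : Type*} {Φ : (X → Bool) → Prop} {a b : X → Bool}
    (ha : Φ a) (h : ReflTransGen (StepRel Φ) a b) : ConnectedIn Φ a b := by
  induction h using ReflTransGen.head_induction_on with
  | refl => exact ⟨0, fun _ => b, rfl, rfl, fun i _ => ha, fun i hi => absurd hi (Nat.not_lt_zero i)⟩
  | head h' hrtg ih =>
    rename_i a' c
    obtain ⟨n, f, hf0, hfn, hfall, hfstep⟩ := ih h'.2.1
    refine ⟨n + 1, fun i => if i = 0 then a' else f (i - 1), by simp, by simp [hfn], ?_, ?_⟩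
    · intro i hi
      rcases i with _ | j
      · simpa using ha
      · simpa using hfall j (by omega)
    · intro i hi
      rcases i with _ | j
      · simpa [hf0] using h'.2.2
      · simpa using hfstep j (by omega)

theorem rtg_of_connectedIn {X : Type*} {Φ : (X → Bool) → Prop} {a b : X → Bool}
    (h : ConnectedIn Φ a b) : ReflTransGen (StepRel Φ) a b := by
  obtain ⟨n, f, hf0, hfn, hfall, hfstep⟩ := h
  subst hf0 hfn
  induction n with
  | zero => exact ReflTransGen.refl
  | succ n ih =>
    refine ReflTransGen.tail (ih (fun i hi => hfall i (by omega)) (fun i hi => hfstep i (by omega))) ?_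
    exact ⟨hfall n (by omega), hfall (n + 1) (by omega), hfstep n (by omega)⟩

theorem uniq_diff {X : Type*} {f g : X → Bool} {w : X} (hw : f w ≠ g w)
    (h : ∀ u, u ≠ w → f u = g u) : ∃! u, f u ≠ g u :=
  ⟨w, hw, fun u hu => by_contra fun hne => hu (h u hne)⟩

theorem psiCl_ext {Φ₀ : (V → Bool) → Prop} {x y z : V} {σ : V → Bool}
    (h : PhiCl Φ₀ x y z σ) : PsiCl Φ₀ x y z (extAssign x y z σ) := by
  obtain ⟨h0, hcl⟩ := h
  refine ⟨h0, ?_, ?_, ?_, ?_⟩ <;> simp [extAssign] <;> exact hcl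

theorem phiCl_proj {Φ₀ : (V → Bool) → Prop} {x y z : V} {τ : V ⊕ Fin 3 → Bool}
    (h : PsiCl Φ₀ x y z τ) : PhiCl Φ₀ x y z (τ ∘ Sum.inl) := by
  obtain ⟨h0, ha, hb, hc, hcl⟩ := h
  refine ⟨h0, ?_⟩
  rcases hcl with h' | h' | h'
  · exact Or.inl (ha h')
  · exact Or.inr (Or.inl (hb h'))
  · exact Or.inr (Or.inr (hc h'))

theorem liftStepX {Φ₀ : (V → Bool) → Prop} {x y z : V}
    (hxy : x ≠ y) (hxz : x ≠ z) {σ σ' : V → Bool}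
    (hσ : PhiCl Φ₀ x y z σ) (hσ' : PhiCl Φ₀ x y z σ')
    (hagree : ∀ u, u ≠ x → σ u = σ' u) (hx : σ x = false) (hx' : σ' x = true) :
    ReflTransGen (StepRel (PsiCl Φ₀ x y z)) (extAssign x y z σ) (extAssign x y z σ') := by
  have hy : σ y = σ' y := hagree y (Ne.symm hxy)
  have hz : σ z = σ' z := hagree z (Ne.symm hxz)
  set mid : V ⊕ Fin 3 → Bool := Sum.elim σ' ![false, σ y, σ z] with hmid
  have hmidsat : PsiCl Φ₀ x y z mid := by
    obtain ⟨h0, hcl⟩ := hσ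
    refine ⟨hσ'.1, by simp [hmid], ?_, ?_, ?_⟩
    · intro hb; simp [hmid] at hb ⊢; rw [← hy]; exact hb
    · intro hc; simp [hmid] at hc ⊢; rw [← hz]; exact hc
    · rcases hcl with h' | h' | h'
      · rw [hx] at h'; exact absurd h' (by simp)
      · exact Or.inr (Or.inl (by simpa [hmid] using h'))
      · exact Or.inr (Or.inr (by simpa [hmid] using h'))
  have step1 : StepRel (PsiCl Φ₀ x y z) (extAssign x y z σ) mid := by
    refine ⟨psiCl_ext hσ, hmidsat, uniq_diff (w := Sum.inl x) ?_ ?_⟩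
    · simp [extAssign, hmid, hx, hx']
    · rintro (u | i) h
      · have : u ≠ x := fun h' => h (by rw [h'])
        simpa [extAssign, hmid] using hagree u this
      · fin_cases i <;> simp [extAssign, hmid, hx]
  have step2 : StepRel (PsiCl Φ₀ x y z) mid (extAssign x y z σ') := by
    refine ⟨hmidsat, psiCl_ext hσ', uniq_diff (w := Sum.inr 0) ?_ ?_⟩
    · simp [extAssign, hmid, hx']
    · rintro (u | i) h
      · simp [extAssign, hmid]
      · fin_cases i <;> simp [extAssign, hmid, hy, hz] at h ⊢ <;> tauto
  exact (ReflTransGen.single step1).tail step2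

theorem liftStepY {Φ₀ : (V → Bool) → Prop} {x y z : V}
    (hxy : x ≠ y) (hyz : y ≠ z) {σ σ' : V → Bool}
    (hσ : PhiCl Φ₀ x y z σ) (hσ' : PhiCl Φ₀ x y z σ')
    (hagree : ∀ u, u ≠ y → σ u = σ' u) (hy : σ y = false) (hy' : σ' y = true) :
    ReflTransGen (StepRel (PsiCl Φ₀ x y z)) (extAssign x y z σ) (extAssign x y z σ') := by
  have hx : σ x = σ' x := hagree x hxy
  have hz : σ z = σ' z := hagree z (Ne.symm hyz)
  set mid : V ⊕ Fin 3 → Bool := Sum.elim σ' ![σ x, false, σ z] with hmid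
  have hmidsat : PsiCl Φ₀ x y z mid := by
    obtain ⟨h0, hcl⟩ := hσ
    refine ⟨hσ'.1, ?_, by simp [hmid], ?_, ?_⟩
    · intro hb; simp [hmid] at hb ⊢; rw [← hx]; exact hb
    · intro hc; simp [hmid] at hc ⊢; rw [← hz]; exact hc
    · rcases hcl with h' | h' | h'
      · exact Or.inl (by simpa [hmid] using h')
      · rw [hy] at h'; exact absurd h' (by simp)
      · exact Or.inr (Or.inr (by simpa [hmid] using h'))
  have step1 : StepRel (PsiCl Φ₀ x y z) (extAssign x y z σ) mid := by
    refine ⟨psiCl_ext hσ, hmidsat, uniq_diff (w := Sum.inl y) ?_ ?_⟩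
    · simp [extAssign, hmid, hy, hy']
    · rintro (u | i) h
      · have : u ≠ y := fun h' => h (by rw [h'])
        simpa [extAssign, hmid] using hagree u this
      · fin_cases i <;> simp [extAssign, hmid, hy]
  have step2 : StepRel (PsiCl Φ₀ x y z) mid (extAssign x y z σ') := by
    refine ⟨hmidsat, psiCl_ext hσ', uniq_diff (w := Sum.inr 1) ?_ ?_⟩
    · simp [extAssign, hmid, hy']
    · rintro (u | i) h
      · simp [extAssign, hmid]
      · fin_cases i <;> simp [extAssign, hmid, hx, hz] at h ⊢ <;> tauto
  exact (ReflTransGen.single step1).tail step2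

theorem liftStepZ {Φ₀ : (V → Bool) → Prop} {x y z : V}
    (hxz : x ≠ z) (hyz : y ≠ z) {σ σ' : V → Bool}
    (hσ : PhiCl Φ₀ x y z σ) (hσ' : PhiCl Φ₀ x y z σ')
    (hagree : ∀ u, u ≠ z → σ u = σ' u) (hz : σ z = false) (hz' : σ' z = true) :
    ReflTransGen (StepRel (PsiCl Φ₀ x y z)) (extAssign x y z σ) (extAssign x y z σ') := by
  have hx : σ x = σ' x := hagree x hxz
  have hy : σ y = σ' y := hagree y hyz
  set mid : V ⊕ Fin 3 → Bool := Sum.elim σ' ![σ x, σ y, false] with hmid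
  have hmidsat : PsiCl Φ₀ x y z mid := by
    obtain ⟨h0, hcl⟩ := hσ
    refine ⟨hσ'.1, ?_, ?_, by simp [hmid], ?_⟩
    · intro hb; simp [hmid] at hb ⊢; rw [← hx]; exact hb
    · intro hc; simp [hmid] at hc ⊢; rw [← hy]; exact hc
    · rcases hcl with h' | h' | h'
      · exact Or.inl (by simpa [hmid] using h')
      · exact Or.inr (Or.inl (by simpa [hmid] using h'))
      · rw [hz] at h'; exact absurd h' (by simp)
  have step1 : StepRel (PsiCl Φ₀ x y z) (extAssign x y z σ) mid := by
    refine ⟨psiCl_ext hσ, hmidsat, uniq_diff (w := Sum.inl z) ?_ ?_⟩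
    · simp [extAssign, hmid, hz, hz']
    · rintro (u | i) h
      · have : u ≠ z := fun h' => h (by rw [h'])
        simpa [extAssign, hmid] using hagree u this
      · fin_cases i <;> simp [extAssign, hmid, hz]
  have step2 : StepRel (PsiCl Φ₀ x y z) mid (extAssign x y z σ') := by
    refine ⟨hmidsat, psiCl_ext hσ', uniq_diff (w := Sum.inr 2) ?_ ?_⟩
    · simp [extAssign, hmid, hz']
    · rintro (u | i) h
      · simp [extAssign, hmid]
      · fin_cases i <;> simp [extAssign, hmid, hx, hy] at h ⊢ <;> tauto
  exact (ReflTransGen.single step1).tail step2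

theorem forward_step {Φ₀ : (V → Bool) → Prop} {x y z : V}
    (hxy : x ≠ y) (hxz : x ≠ z) (hyz : y ≠ z) {σ σ' : V → Bool}
    (h : StepRel (PhiCl Φ₀ x y z) σ σ') :
    ReflTransGen (StepRel (PsiCl Φ₀ x y z)) (extAssign x y z σ) (extAssign x y z σ') := by
  obtain ⟨hσ, hσ', v, hv, huniq⟩ := h
  have hagree : ∀ u, u ≠ v → σ u = σ' u := fun u hu =>
    by_contra fun h' => hu (huniq u h')
  have hagree' : ∀ u, u ≠ v → σ' u = σ u := fun u hu => (hagree u hu).symm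
  by_cases hvx : v = x
  · subst hvx
    cases hsv : σ v with
    | false =>
      have h' : σ' v = true := by rw [hsv] at hv; exact (Bool.not_eq_false _).mp (Ne.symm hv)
      exact liftStepX hxy hxz hσ hσ' hagree hsv h'
    | true =>
      have h' : σ' v = false := by rw [hsv] at hv; exact (Bool.not_eq_true _).mp (Ne.symm hv)
      exact Std.Symm.symm (self := @ReflTransGen.stdSymm _ _ ⟨fun a b h => stepRel_symm _ h⟩) _ _ (liftStepX hxy hxz hσ' hσ hagree' h' hsv)
  by_cases hvy : v = y
  · subst hvy
    cases hsv : σ v with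
    | false =>
      have h' : σ' v = true := by rw [hsv] at hv; exact (Bool.not_eq_false _).mp (Ne.symm hv)
      exact liftStepY hxy hyz hσ hσ' hagree hsv h'
    | true =>
      have h' : σ' v = false := by rw [hsv] at hv; exact (Bool.not_eq_true _).mp (Ne.symm hv)
      exact Std.Symm.symm (self := @ReflTransGen.stdSymm _ _ ⟨fun a b h => stepRel_symm _ h⟩) _ _ (liftStepY hxy hyz hσ' hσ hagree' h' hsv)
  by_cases hvz : v = z
  · subst hvz
    cases hsv : σ v with
    | false =>
      have h' : σ' v = true := by rw [hsv] at hv; exact (Bool.not_eq_false _).mp (Ne.symm hv)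
      exact liftStepZ hxz hyz hσ hσ' hagree hsv h'
    | true =>
      have h' : σ' v = false := by rw [hsv] at hv; exact (Bool.not_eq_true _).mp (Ne.symm hv)
      exact Std.Symm.symm (self := @ReflTransGen.stdSymm _ _ ⟨fun a b h => stepRel_symm _ h⟩) _ _ (liftStepZ hxz hyz hσ' hσ hagree' h' hsv)
  · refine ReflTransGen.single ⟨psiCl_ext hσ, psiCl_ext hσ', uniq_diff (w := Sum.inl v) ?_ ?_⟩
    · simpa [extAssign] using hv
    · rintro (u | i) h
      · have : u ≠ v := fun h' => h (by rw [h'])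
        simpa [extAssign] using hagree u this
      · fin_cases i <;> simp [extAssign] <;>
          [exact hagree x (fun h => hvx h.symm); exact hagree y (fun h => hvy h.symm);
           exact hagree z (fun h => hvz h.symm)]

theorem backward_step {Φ₀ : (V → Bool) → Prop} {x y z : V} {τ τ' : V ⊕ Fin 3 → Bool}
    (h : StepRel (PsiCl Φ₀ x y z) τ τ') :
    ReflTransGen (StepRel (PhiCl Φ₀ x y z)) (τ ∘ Sum.inl) (τ' ∘ Sum.inl) := by
  obtain ⟨hτ, hτ', w, hw, huniq⟩ := h
  cases w with
  | inl v =>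
    refine ReflTransGen.single ⟨phiCl_proj hτ, phiCl_proj hτ', uniq_diff (w := v) hw ?_⟩
    intro u hu
    by_contra h'
    exact hu (Sum.inl.inj (huniq _ h'))
  | inr i =>
    have : τ ∘ Sum.inl = τ' ∘ Sum.inl := by
      funext u
      by_contra h'
      exact absurd (huniq (Sum.inl u) h') (by simp)
    rw [this]

theorem stmt_19 (Φ₀ : (V → Bool) → Prop) (x y z : V)
    (hxy : x ≠ y) (hxz : x ≠ z) (hyz : y ≠ z)
    (σ σ' : V → Bool) (hσ : PhiCl Φ₀ x y z σ) (hσ' : PhiCl Φ₀ x y z σ') :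
    ConnectedIn (PhiCl Φ₀ x y z) σ σ' ↔
      ConnectedIn (PsiCl Φ₀ x y z) (extAssign x y z σ) (extAssign x y z σ') := by
  constructor
  · intro h
    exact connectedIn_of_rtg (psiCl_ext hσ)
      (ReflTransGen.lift' (extAssign x y z)
        (fun u v huv => forward_step hxy hxz hyz huv) _ _ (rtg_of_connectedIn h))
  · intro h
    refine connectedIn_of_rtg hσ ?_
    have := ReflTransGen.lift' (fun τ => τ ∘ Sum.inl)
      (fun u v huv => backward_step huv) _ _ (rtg_of_connectedIn h)
    exact this
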